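/- arXiv:1601.01003 — 3 statements merged into one kernel-verified Lean document; each statement's English description precedes it below -/
import Mathlib

section
/- Let x(q), y(q) ∈ ℤ[q]/(qᵐ − 1) be cyclic polynomials all of whose m coefficients are ±1, and let c(q) = x(q)·y(q). Then every coefficient of c(q) is an odd integer, and all coefficients of c(q) are congruent to each other modulo 4. -/
/-!
For odd integers `a, b` one has `a * b ≡ a + b - 1 (mod 4)`, because `(a - 1) * (b - 1)` is a
product of two even numbers. Summing over `i` gives `c_k ≡ ∑ x + ∑ y - m (mod 4)`, which does
not depend on `k`; and `c_k` is a sum of `m` odd terms, hence odd.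
-/

theorem Int.mul_modEq_add_sub_one_of_odd {a b : ℤ} (ha : Odd a) (hb : Odd b) :
    a * b ≡ a + b - 1 [ZMOD 4] := by
  obtain ⟨r, rfl⟩ := ha
  obtain ⟨s, rfl⟩ := hb
  exact Int.modEq_iff_dvd.mpr ⟨-(r * s), by ring⟩

section CyclicConvolution

variable {G : Type*} [AddCommGroup G] [Fintype G] {x y : G → ℤ}

theorem sum_mul_sub_modEq_card_two (hx : ∀ i, Odd (x i)) (hy : ∀ i, Odd (y i)) (k : G) :
    ∑ i, x i * y (k - i) ≡ Fintype.card G [ZMOD 2] :=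
  calc ∑ i, x i * y (k - i) ≡ ∑ _i : G, 1 [ZMOD 2] :=
        Int.ModEq.sum fun i _ => Int.odd_iff.mp ((hx i).mul (hy (k - i)))
    _ = Fintype.card G := by simp

theorem odd_sum_mul_sub (hG : Odd (Fintype.card G)) (hx : ∀ i, Odd (x i))
    (hy : ∀ i, Odd (y i)) (k : G) : Odd (∑ i, x i * y (k - i)) := by
  have hG' : (Fintype.card G : ℤ) ≡ 1 [ZMOD 2] := Int.odd_iff.mp (by exact_mod_cast hG)
  exact Int.odd_iff.mpr ((sum_mul_sub_modEq_card_two hx hy k).trans hG')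

theorem sum_mul_sub_modEq_four (hx : ∀ i, Odd (x i)) (hy : ∀ i, Odd (y i)) (k : G) :
    ∑ i, x i * y (k - i) ≡ ∑ i, x i + ∑ i, y i - Fintype.card G [ZMOD 4] :=
  calc ∑ i, x i * y (k - i) ≡ ∑ i, (x i + y (k - i) - 1) [ZMOD 4] :=
        Int.ModEq.sum fun i _ => Int.mul_modEq_add_sub_one_of_odd (hx i) (hy (k - i))
    _ = ∑ i, x i + ∑ i, y i - Fintype.card G := by
      rw [Finset.sum_sub_distrib, Finset.sum_add_distrib,
        Fintype.sum_equiv (Equiv.subLeft k) (fun i => y (k - i)) y fun _ => rfl]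
      simp

end CyclicConvolution

theorem odd_of_eq_one_or_eq_neg_one {a : ℤ} (h : a = 1 ∨ a = -1) : Odd a := by
  rcases h with rfl | rfl <;> decide

/-- If `x, y` are cyclic polynomials mod `qᵐ − 1` (`m` odd) with all
coefficients `±1`, then every coefficient of `c = x·y` is odd and all
coefficients of `c` are congruent mod 4. Here `c_k = ∑_{i} x_i y_{k-i}` with
indices in `ZMod m`. -/
theorem stmt9 (m : ℕ) [NeZero m] (hm : Odd m) (x y : ZMod m → ℤ)
    (hx : ∀ i, x i = 1 ∨ x i = -1) (hy : ∀ i, y i = 1 ∨ y i = -1) :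
    (∀ k : ZMod m, Odd (∑ i : ZMod m, x i * y (k - i))) ∧
    ∀ k k' : ZMod m,
      (∑ i : ZMod m, x i * y (k - i)) ≡ (∑ i : ZMod m, x i * y (k' - i)) [ZMOD 4] := by
  have hx' i := odd_of_eq_one_or_eq_neg_one (hx i)
  have hy' i := odd_of_eq_one_or_eq_neg_one (hy i)
  refine ⟨odd_sum_mul_sub (by rwa [ZMod.card]) hx' hy', fun k k' => ?_⟩
  exact (sum_mul_sub_modEq_four hx' hy' k).trans (sum_mul_sub_modEq_four hx' hy' k').symm
end

section
/- Let X, Y ∈ ℂ^{m×k} × ℂ^{k×n} with XY = C and rank(X) = rank(C) = r. If C = U D V is a decomposition with U ∈ ℂ^{m×r} of rank r, D ∈ ℂ^{r×r} invertible, V ∈ ℂ^{r×n} of rank r, then there exist W ∈ ℂ^{r×k} and Z ∈ ℂ^{k×r} with X = UW, Y = ZV and WZ = D, provided also rank(Y) = r. -/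
/-!
Since `rank X = rank (X * Y)`, the column space of `X` is that of `C = U * (D * V)`, hence lies in
the column space of `U`, so `X = U * W`; transposing, `Y = Z * V` in the same way. Then
`U * (W * Z) * V = X * Y = U * D * V`, and `U` (full column rank) and `V` (full row rank) cancel.
-/

open Module

namespace Matrix

variable {K : Type*} {l m n o : Type*} [Fintype n]

theorem exists_eq_mul_of_range_le [CommSemiring K] [Fintype o] [DecidableEq n]
    {A : Matrix m n K} {B : Matrix m o K}
    (h : LinearMap.range A.mulVecLin ≤ LinearMap.range B.mulVecLin) :
    ∃ W : Matrix o n K, A = B * W := by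
  have hcol (j : n) : ∃ w, B *ᵥ w = A.col j := by
    simpa [mulVec_single_one] using h (LinearMap.mem_range_self A.mulVecLin (Pi.single j 1))
  choose w hw using hcol
  exact ⟨(of w)ᵀ, ext_col fun j => (hw j).symm⟩

variable [Field K]

theorem range_mulVecLin_mul_eq_of_rank_eq [Fintype o] {A : Matrix m n K} {B : Matrix n o K}
    (h : (A * B).rank = A.rank) :
    LinearMap.range (A * B).mulVecLin = LinearMap.range A.mulVecLin := by
  refine Submodule.eq_of_le_of_finrank_le ?_ h.ge
  rw [mulVecLin_mul]
  exact LinearMap.range_comp_le_range _ _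

theorem exists_eq_mul_of_rank_mul_eq_left [Fintype o] [Fintype l] [DecidableEq n]
    {A : Matrix m n K} {B : Matrix n o K} {P : Matrix m l K} {Q : Matrix l o K}
    (hrank : (A * B).rank = A.rank) (hAB : A * B = P * Q) :
    ∃ W : Matrix l n K, A = P * W := by
  refine exists_eq_mul_of_range_le ?_
  rw [← range_mulVecLin_mul_eq_of_rank_eq hrank, hAB, mulVecLin_mul]
  exact LinearMap.range_comp_le_range _ _

theorem exists_eq_mul_of_rank_mul_eq_right [Fintype m] [Fintype o] [Fintype l] [DecidableEq n]
    {A : Matrix m n K} {B : Matrix n o K} {P : Matrix m l K} {Q : Matrix l o K}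
    (hrank : (A * B).rank = B.rank) (hAB : A * B = P * Q) :
    ∃ Z : Matrix n l K, B = Z * Q := by
  obtain ⟨Z, hZ⟩ := exists_eq_mul_of_rank_mul_eq_left (A := Bᵀ) (B := Aᵀ) (Q := Pᵀ)
    (by rw [← transpose_mul, rank_transpose, rank_transpose, hrank])
    (by rw [← transpose_mul, hAB, transpose_mul])
  exact ⟨Zᵀ, by rw [← transpose_transpose B, hZ, transpose_mul, transpose_transpose]⟩

theorem mulVec_injective_of_rank_eq_card {A : Matrix m n K} (h : A.rank = Fintype.card n) :
    Function.Injective A.mulVec := by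
  have hker := A.mulVecLin.finrank_range_add_finrank_ker
  rw [← rank, h, finrank_fintype_fun_eq_card, Nat.add_eq_left, Submodule.finrank_eq_zero,
    LinearMap.ker_eq_bot] at hker
  exact hker

theorem mul_left_cancel_of_rank_eq_card {U : Matrix m n K} {A B : Matrix n o K}
    (hU : U.rank = Fintype.card n) (h : U * A = U * B) : A = B :=
  ext_col fun j => mulVec_injective_of_rank_eq_card hU (congrArg (col · j) h)

theorem mul_right_cancel_of_rank_eq_card [Fintype m] {V : Matrix m n K} {A B : Matrix l m K}
    (hV : V.rank = Fintype.card m) (h : A * V = B * V) : A = B := by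
  rw [← rank_transpose] at hV
  exact transpose_injective <| mul_left_cancel_of_rank_eq_card (A := Aᵀ) (B := Bᵀ) hV
    (by rw [← transpose_mul, h, transpose_mul])

end Matrix

open Matrix

theorem stmt10_general {m n k r : ℕ}
    (X : Matrix (Fin m) (Fin k) ℂ) (Y : Matrix (Fin k) (Fin n) ℂ)
    (C : Matrix (Fin m) (Fin n) ℂ)
    (U : Matrix (Fin m) (Fin r) ℂ) (D : Matrix (Fin r) (Fin r) ℂ)
    (V : Matrix (Fin r) (Fin n) ℂ)
    (hXY : X * Y = C) (hX : X.rank = r) (hY : Y.rank = r) (hC : C.rank = r)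
    (hUDV : C = U * D * V) (hU : U.rank = r) (hV : V.rank = r) :
    ∃ (W : Matrix (Fin r) (Fin k) ℂ) (Z : Matrix (Fin k) (Fin r) ℂ),
      X = U * W ∧ Y = Z * V ∧ W * Z = D := by
  obtain ⟨W, hW⟩ := exists_eq_mul_of_rank_mul_eq_left (by rw [hXY, hC, hX])
    (hXY.trans (hUDV.trans (Matrix.mul_assoc U D V)))
  obtain ⟨Z, hZ⟩ := exists_eq_mul_of_rank_mul_eq_right (by rw [hXY, hC, hY]) (hXY.trans hUDV)
  refine ⟨W, Z, hW, hZ, ?_⟩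
  refine mul_left_cancel_of_rank_eq_card (hU.trans (Fintype.card_fin r).symm) ?_
  refine mul_right_cancel_of_rank_eq_card (hV.trans (Fintype.card_fin r).symm) ?_
  calc U * (W * Z) * V = (U * W) * (Z * V) := by simp only [Matrix.mul_assoc]
    _ = U * D * V := by rw [← hW, ← hZ, hXY, hUDV]

/-- If `XY = C`, `rank X = rank Y = rank C = r`, and `C = U D V`
with `U` of rank `r`, `D` invertible, `V` of rank `r`, then `X = UW`, `Y = ZV`
for some `W, Z` with `WZ = D`. -/
theorem stmt10 {m n k r : ℕ}
    (X : Matrix (Fin m) (Fin k) ℂ) (Y : Matrix (Fin k) (Fin n) ℂ)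
    (C : Matrix (Fin m) (Fin n) ℂ)
    (U : Matrix (Fin m) (Fin r) ℂ) (D : Matrix (Fin r) (Fin r) ℂ)
    (V : Matrix (Fin r) (Fin n) ℂ)
    (hXY : X * Y = C) (hX : X.rank = r) (hY : Y.rank = r) (hC : C.rank = r)
    (hUDV : C = U * D * V) (hU : U.rank = r) (hD : IsUnit D) (hV : V.rank = r) :
    ∃ (W : Matrix (Fin r) (Fin k) ℂ) (Z : Matrix (Fin k) (Fin r) ℂ),
      X = U * W ∧ Y = Z * V ∧ W * Z = D :=
  stmt10_general X Y C U D V hXY hX hY hC hUDV hU hV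
end

section
/- Let c ≥ 0 and let z ∈ ℝ^k satisfy ∑_l z_l = c. Partition the indices into I₊ = {l : z_l > 0} and I₋ = {l : z_l ≤ 0}. Then the Euclidean projection of z onto the simplex {w ∈ ℝ^k : ∑ w_l = c, w ≥ 0} assigns 0 to every coordinate in I₋, and on I₊ it equals the projection of (z_l)_{l∈I₊} onto the simplex {w ∈ ℝ^{I₊} : ∑ w_l = c, w ≥ 0}. -/
/-!
Optimality of `p` forbids moving the mass `p l` of a supported coordinate `l` to any other
coordinate `m`; comparing costs gives the KKT-type bound `z m - p m ≤ z l`. If `z l ≤ 0` this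
makes every residual `z m - p m` nonpositive and the one at `l` negative, which contradicts
`∑ (z - p) = c - c = 0`. Once `p` vanishes off `{z > 0}`, both the cost and the simplex
constraints split along that set, and extending a competitor on `{z > 0}` by zero shows that the
restriction of `p` is still optimal.
-/

open Finset

variable {ι : Type*} [Fintype ι]

def InSimplex (c : ℝ) (w : ι → ℝ) : Prop :=
  (∑ l, w l) = c ∧ ∀ l, 0 ≤ w l

def IsSimplexProjection (c : ℝ) (z p : ι → ℝ) : Prop :=
  InSimplex c p ∧ ∀ w : ι → ℝ, InSimplex c w → ∑ l, (z l - p l) ^ 2 ≤ ∑ l, (z l - w l) ^ 2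

lemma sum_sub_sum_eq_of_eq_off_pair {f g : ι → ℝ} {l m : ι} (hlm : l ≠ m)
    (h : ∀ i, i ≠ l ∧ i ≠ m → f i = g i) :
    ∑ i, f i - ∑ i, g i = (f l - g l) + (f m - g m) := by
  rw [← Finset.sum_sub_distrib]
  exact Fintype.sum_eq_add l m hlm fun i hi => sub_eq_zero.mpr (h i hi)

namespace IsSimplexProjection

variable {c : ℝ} {z p : ι → ℝ}

lemma sub_le_of_pos (hp : IsSimplexProjection c z p) {l : ι} (hl : 0 < p l) (m : ι) :
    z m - p m ≤ z l := by
  obtain ⟨⟨hpsum, hpnn⟩, hmin⟩ := hp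
  rcases eq_or_ne l m with rfl | hlm
  · linarith [hpnn l]
  classical
  set w := Function.update (Function.update p l 0) m (p m + p l)
  have hwl : w l = 0 := by simp [w, hlm]
  have hwm : w m = p m + p l := by simp [w]
  have hw : ∀ i, i ≠ l ∧ i ≠ m → w i = p i := fun i hi => by simp [w, hi.1, hi.2]
  have hwsum : ∑ i, w i - ∑ i, p i = 0 := by
    rw [sum_sub_sum_eq_of_eq_off_pair hlm hw, hwl, hwm]; ring
  have hwnn : ∀ i, 0 ≤ w i := by
    intro i
    by_cases him : i = m
    · rw [him, hwm]; linarith [hpnn m]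
    by_cases hil : i = l
    · rw [hil, hwl]
    · rw [hw i ⟨hil, him⟩]; exact hpnn i
  have hcost := sum_sub_sum_eq_of_eq_off_pair (f := fun i => (z i - w i) ^ 2)
    (g := fun i => (z i - p i) ^ 2) hlm fun i hi => by simp only [hw i hi]
  have hle := hmin w ⟨by linarith, hwnn⟩
  simp only [hwl, hwm] at hcost
  -- the cost increment of the transfer is `2 * p l * (z l - (z m - p m))`
  nlinarith

lemma eq_zero_of_nonpos (hp : IsSimplexProjection c z p) (hz : ∑ l, z l = c) {l : ι}
    (hzl : z l ≤ 0) : p l = 0 := by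
  by_contra hpl
  have hl : 0 < p l := lt_of_le_of_ne (hp.1.2 l) (Ne.symm hpl)
  have hres : ∑ i, (z i - p i) < ∑ _i : ι, (0 : ℝ) :=
    Finset.sum_lt_sum (fun m _ => (hp.sub_le_of_pos hl m).trans hzl)
      ⟨l, mem_univ l, by linarith⟩
  rw [Finset.sum_sub_distrib, hz, hp.1.1, sub_self, sum_const_zero] at hres
  exact lt_irrefl 0 hres

lemma subtype (hp : IsSimplexProjection c z p) (P : ι → Prop) [DecidablePred P]
    (hP : ∀ l, ¬P l → p l = 0) :
    IsSimplexProjection c (fun l : Subtype P => z l) (fun l => p l) := by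
  obtain ⟨⟨hpsum, hpnn⟩, hmin⟩ := hp
  have hsplit (f : ι → ℝ) :=
    Fintype.sum_subtype_add_sum_subtype P f
  have hoff : ∑ l : {l // ¬P l}, p l = 0 := Fintype.sum_eq_zero _ fun l => hP l l.2
  refine ⟨⟨by rw [← hpsum, ← hsplit, hoff, add_zero], fun l => hpnn l⟩, ?_⟩
  rintro w ⟨hwsum, hwnn⟩
  set W : ι → ℝ := fun l => if h : P l then w ⟨l, h⟩ else 0
  have hWon (l : Subtype P) : W l = w l := dif_pos l.2
  have hWoff (l : {l // ¬P l}) : W l = p l := by simp [W, l.2, hP l l.2]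
  have hW : InSimplex c W := by
    refine ⟨?_, fun l => ?_⟩
    · rw [← hsplit, ← hwsum, Fintype.sum_congr _ _ hWon,
        Fintype.sum_eq_zero (fun l : {l // ¬P l} => W l) fun l => dif_neg l.2, add_zero]
    · by_cases h : P l
      · exact (hWon ⟨l, h⟩).symm ▸ hwnn ⟨l, h⟩
      · exact (hWoff ⟨l, h⟩).symm ▸ hpnn l
  have hle := hmin W hW
  rw [← hsplit, ← hsplit] at hle
  simp only [hWon, hWoff] at hle
  linarith

end IsSimplexProjection

theorem stmt16_general (k : ℕ) (c : ℝ) (z p : Fin k → ℝ)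
    (hz : (∑ l, z l) = c)
    (hp : ((∑ l, p l) = c ∧ ∀ l, 0 ≤ p l) ∧
      ∀ w : Fin k → ℝ, ((∑ l, w l) = c ∧ ∀ l, 0 ≤ w l) →
        (∑ l, (z l - p l) ^ 2) ≤ ∑ l, (z l - w l) ^ 2) :
    (∀ l, z l ≤ 0 → p l = 0) ∧
    (((∑ l : {l : Fin k // 0 < z l}, p l.1) = c ∧
        ∀ l : {l : Fin k // 0 < z l}, 0 ≤ p l.1) ∧
      ∀ w : {l : Fin k // 0 < z l} → ℝ,
        ((∑ l, w l) = c ∧ ∀ l, 0 ≤ w l) →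
          (∑ l : {l : Fin k // 0 < z l}, (z l.1 - p l.1) ^ 2) ≤
            ∑ l : {l : Fin k // 0 < z l}, (z l.1 - w l) ^ 2) := by
  have hproj : IsSimplexProjection c z p := hp
  have hzero : ∀ l, z l ≤ 0 → p l = 0 := fun l => hproj.eq_zero_of_nonpos hz
  exact ⟨hzero, hproj.subtype (fun l => 0 < z l) fun l hl => hzero l (not_lt.mp hl)⟩

/-- If `z` lies on the hyperplane `∑ z = c` and `p` is its Euclidean
projection onto the simplex, then `p` vanishes on the nonpositive coordinates of
`z`, and on the positive coordinates it is the projection of the restriction of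
`z` onto the corresponding lower-dimensional simplex. -/
theorem stmt16 (k : ℕ) (c : ℝ) (hc : 0 ≤ c) (z p : Fin k → ℝ)
    (hz : (∑ l, z l) = c)
    (hp : ((∑ l, p l) = c ∧ ∀ l, 0 ≤ p l) ∧
      ∀ w : Fin k → ℝ, ((∑ l, w l) = c ∧ ∀ l, 0 ≤ w l) →
        (∑ l, (z l - p l) ^ 2) ≤ ∑ l, (z l - w l) ^ 2) :
    (∀ l, z l ≤ 0 → p l = 0) ∧
    (((∑ l : {l : Fin k // 0 < z l}, p l.1) = c ∧
        ∀ l : {l : Fin k // 0 < z l}, 0 ≤ p l.1) ∧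
      ∀ w : {l : Fin k // 0 < z l} → ℝ,
        ((∑ l, w l) = c ∧ ∀ l, 0 ≤ w l) →
          (∑ l : {l : Fin k // 0 < z l}, (z l.1 - p l.1) ^ 2) ≤
            ∑ l : {l : Fin k // 0 < z l}, (z l.1 - w l) ^ 2) :=
  stmt16_general k c z p hz hp
end
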